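/- arXiv:0910.4515 — 2 statements merged into one kernel-verified Lean document; each statement's English description precedes it below -/
import Mathlib

section
/- For all L, M, N ∈ P(n,p) and all words a, c ∈ [p]^n with D(a,c) = N, the (a,c) entry of the matrix product A_L·A_M equals c_{L,M}^N := Σ_B ∏_{r,t=1}^{p} (N_{r,t})!/(B_{r,1,t}!·B_{r,2,t}!···B_{r,p,t}!), where the sum runs over all three-dimensional arrays B ∈ ℕ^{p×p×p} satisfying Σ_k B_{r,s,k} = L_{r,s}, Σ_k B_{k,s,t} = M_{s,t} and Σ_k B_{r,k,t} = N_{r,t} for all r,s,t ∈ [p]. Consequently A_L·A_M = Σ_{N∈P(n,p)} c_{L,M}^N A_N. -/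
open scoped Classical

noncomputable section

/-- `D(a,b) ∈ ℕ^{p×p}`: `D(a,b)_{i,j}` counts positions `k` with `a_k = i` and `b_k = j`. -/
def Dmat {n p : ℕ} (a b : Fin n → Fin p) : Matrix (Fin p) (Fin p) ℕ :=
  Matrix.of fun i j => (Finset.univ.filter fun k => a k = i ∧ b k = j).card

/-- The 0/1 matrix `A_D` with `(A_D)_{a,b} = 1` iff `D(a,b) = D`. -/
def AD (n p : ℕ) (D : Matrix (Fin p) (Fin p) ℕ) :
    Matrix (Fin n → Fin p) (Fin n → Fin p) ℂ :=
  Matrix.of fun a b => if Dmat a b = D then 1 else 0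

/-- The structure constants `c_{L,M}^N = Σ_B ∏_{r,t} N_{r,t}!/(B_{r,1,t}!⋯B_{r,p,t}!)`,
where `B` runs over all `B ∈ ℕ^{p×p×p}` with `Σ_k B_{r,s,k} = L_{r,s}`,
`Σ_k B_{k,s,t} = M_{s,t}` and `Σ_k B_{r,k,t} = N_{r,t}`.  (Since all feasible `B`
have entries at most `n`, the entries are encoded in `Fin (n+1)`.) -/
def cLMN (n p : ℕ) (L M N : Matrix (Fin p) (Fin p) ℕ) : ℕ :=
  ∑ B ∈ (Finset.univ : Finset (Fin p → Fin p → Fin p → Fin (n + 1))).filter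
      (fun B => (∀ r s, ∑ k, (B r s k : ℕ) = L r s) ∧
        (∀ s t, ∑ k, (B k s t : ℕ) = M s t) ∧
        (∀ r t, ∑ k, (B r k t : ℕ) = N r t)),
    ∏ r, ∏ t, Nat.multinomial Finset.univ (fun s => (B r s t : ℕ))

/-!
`(A_L A_M)_{a,c}` counts the words `b` with `D(a,b) = L` and `D(b,c) = M`. Sort these by the
array `B_{r,s,t} = #{k | a_k = r, b_k = s, c_k = t}`: its three marginals are `D(a,b)`,
`D(b,c)` and `D(a,c) = N`, so the words counted are exactly those whose array is one of the `B`
in `c_{L,M}^N`.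
For a fixed `B`, the word `b` is chosen independently on each class `{k | a_k = r, c_k = t}`, of
size `N_{r,t}`, as a word with `B_{r,s,t}` letters `s`, which can be done in multinomially many
ways. The expansion of `A_L A_M` follows because exactly one `A_N` has a `1` at `(a, c)`.
-/

open Finset

section Counting

variable {α β ι : Type*} [Fintype α] [Fintype β] [DecidableEq β]

theorem card_filter_eq_sum_card_filter_and (P : α → Prop) [DecidablePred P] (f : α → β) :
    #{x | P x} = ∑ j, #{x | P x ∧ f x = j} := by
  rw [card_eq_sum_card_fiberwise (f := f) (t := univ) fun _ _ => mem_univ _]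
  simp only [filter_filter]

open MvPolynomial in
theorem card_filter_card_fiber_eq_multinomial [DecidableEq α] (k : β → ℕ)
    (hk : ∑ j, k j = Fintype.card α) :
    #{g : α → β | ∀ j, #{x | g x = j} = k j} = Nat.multinomial univ k := by
  -- Compare the coefficients of `X^k` in `∏ x : α, ∑ j, X j`, expanded once word by word and
  -- once by the multinomial theorem.
  have hprod : ∀ g : α → β,
      ∏ x, (X (g x) : MvPolynomial β ℕ) = monomial (∑ x, Finsupp.single (g x) 1) 1 := by
    intro g
    simp only [monomial_sum_one, X]
  have hterm : ∀ k' : β → ℕ,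
      (Nat.multinomial univ k' : MvPolynomial β ℕ) * ∏ j, X j ^ k' j =
      monomial (Finsupp.equivFunOnFinite.symm k') (Nat.multinomial univ k') := by
    intro k'
    simp only [X_pow_eq_monomial, ← monomial_sum_one, Finsupp.equivFunOnFinite_symm_eq_sum,
      ← C_eq_coe_nat, C_mul_monomial, mul_one, Nat.cast_id]
  have hexpand : ∑ g : α → β, ∏ x, (X (g x) : MvPolynomial β ℕ) =
      ∑ k' ∈ piAntidiag univ (Fintype.card α),
        (Nat.multinomial univ k' : MvPolynomial β ℕ) * ∏ j, X j ^ k' j := by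
    rw [← sum_pow_eq_sum_piAntidiag, ← Fintype.prod_sum, prod_const, card_univ]
  have hcoeff := congrArg (coeff (Finsupp.equivFunOnFinite.symm k)) hexpand
  simp only [hprod, hterm, coeff_sum, coeff_monomial, EmbeddingLike.apply_eq_iff_eq,
    sum_ite_eq', mem_piAntidiag, hk, sum_boole] at hcoeff
  simpa [Finsupp.ext_iff, Finsupp.finsetSum_apply, Finsupp.single_apply, _root_.funext_iff]
    using hcoeff

theorem card_filter_card_fiber_and_eq_prod_multinomial [DecidableEq α] [Fintype ι]
    [DecidableEq ι] (π : α → ι) (B : ι → β → ℕ)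
    (hB : ∀ i, ∑ j, B i j = #{x | π x = i}) :
    #{b : α → β | ∀ i j, #{x | π x = i ∧ b x = j} = B i j} =
      ∏ i, Nat.multinomial univ (B i) := by
  have hfiber : ∀ (b : α → β) i j,
      #{x : {x // π x = i} | b x = j} = #{x | π x = i ∧ b x = j} := by
    intro b i j
    rw [← card_map (Function.Embedding.subtype _)]
    congr 1
    ext x
    simp [and_comm]
  let restrict : (α → β) ≃ ∀ i, {x // π x = i} → β :=
    (Equiv.arrowCongr (Equiv.sigmaFiberEquiv π).symm (Equiv.refl β)).trans
      (Equiv.piCurry fun _ _ => β)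
  calc #{b : α → β | ∀ i j, #{x | π x = i ∧ b x = j} = B i j}
      = Fintype.card {b : α → β // ∀ i j, #{x | π x = i ∧ b x = j} = B i j} :=
        (Fintype.card_subtype _).symm
    _ = Fintype.card (∀ i, {g : {x // π x = i} → β // ∀ j, #{x | g x = j} = B i j}) :=
        Fintype.card_congr ((restrict.subtypeEquiv fun b => by simp only [← hfiber]; rfl).trans
          Equiv.subtypePiEquivPi)
    _ = ∏ i, Nat.multinomial univ (B i) := by
        rw [Fintype.card_pi]
        refine prod_congr rfl fun i _ => ?_
        rw [Fintype.card_subtype]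
        convert card_filter_card_fiber_eq_multinomial (B i) ?_
        rw [hB, Fintype.card_subtype]

end Counting

variable {n p : ℕ}

theorem Dmat_apply_lt (a c : Fin n → Fin p) (i j : Fin p) : Dmat a c i j < n + 1 :=
  Nat.lt_succ_of_le ((card_filter_le _ _).trans_eq (card_fin n))

theorem sum_Dmat (a c : Fin n → Fin p) : ∑ i, ∑ j, Dmat a c i j = n := by
  simp only [Dmat, Matrix.of_apply, ← card_filter_eq_sum_card_filter_and,
    sum_card_fiberwise_eq_card_filter]
  simp

/-- The array `B_{r,s,t} = #{k | a_k = r, b_k = s, c_k = t}` of `cLMN` realised by the word `b`. -/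
def jointCount (a b c : Fin n → Fin p) (r s t : Fin p) : Fin (n + 1) :=
  ⟨#{k | (a k, c k) = (r, t) ∧ b k = s},
    Nat.lt_succ_of_le ((card_filter_le _ _).trans_eq (card_fin n))⟩

section jointCount

variable (a b c : Fin n → Fin p)

theorem sum_jointCount_right (r s : Fin p) :
    ∑ t, (jointCount a b c r s t : ℕ) = Dmat a b r s := by
  rw [Dmat, Matrix.of_apply, card_filter_eq_sum_card_filter_and _ c]
  refine sum_congr rfl fun t _ => ?_
  simp only [jointCount, Prod.mk.injEq]
  congr 1
  ext k
  simp only [mem_filter, mem_univ, true_and]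
  tauto

theorem sum_jointCount_left (s t : Fin p) :
    ∑ r, (jointCount a b c r s t : ℕ) = Dmat b c s t := by
  rw [Dmat, Matrix.of_apply, card_filter_eq_sum_card_filter_and _ a]
  refine sum_congr rfl fun r _ => ?_
  simp only [jointCount, Prod.mk.injEq]
  congr 1
  ext k
  simp only [mem_filter, mem_univ, true_and]
  tauto

theorem sum_jointCount_mid (r t : Fin p) :
    ∑ s, (jointCount a b c r s t : ℕ) = Dmat a c r t := by
  rw [Dmat, Matrix.of_apply, card_filter_eq_sum_card_filter_and _ b]
  refine sum_congr rfl fun s _ => ?_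
  simp only [jointCount, Prod.mk.injEq]

end jointCount

theorem card_jointCount_eq (a c : Fin n → Fin p) (B : Fin p → Fin p → Fin p → Fin (n + 1))
    (hB : ∀ r t, ∑ s, (B r s t : ℕ) = Dmat a c r t) :
    #{b | jointCount a b c = B} =
      ∏ r, ∏ t, Nat.multinomial univ (fun s => (B r s t : ℕ)) := by
  have hiff : ∀ b, jointCount a b c = B ↔
      ∀ (i : Fin p × Fin p) s, #{k | (a k, c k) = i ∧ b k = s} = (B i.1 s i.2 : ℕ) := by
    intro b
    simp only [funext_iff, Fin.ext_iff, Prod.forall, jointCount]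
    exact ⟨fun h r t s => h r s t, fun h r s t => h r t s⟩
  have hclass : ∀ i : Fin p × Fin p, ∑ s, (B i.1 s i.2 : ℕ) = #{k | (a k, c k) = i} := by
    rintro ⟨r, t⟩
    simp only [hB, Dmat, Matrix.of_apply, Prod.mk.injEq]
  rw [← Fintype.prod_prod_type fun i => Nat.multinomial univ fun s => (B i.1 s i.2 : ℕ),
    ← card_filter_card_fiber_and_eq_prod_multinomial (fun k => (a k, c k)) _ hclass]
  congr 1
  ext b
  simp only [mem_filter, mem_univ, true_and, hiff]

theorem card_Dmat_eq_and_Dmat_eq (L M N : Matrix (Fin p) (Fin p) ℕ) (a c : Fin n → Fin p)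
    (h : Dmat a c = N) : #{b | Dmat a b = L ∧ Dmat b c = M} = cLMN n p L M N := by
  subst h
  rw [cLMN, card_eq_sum_card_fiberwise (f := fun b => jointCount a b c) fun b hb => ?_]
  · refine sum_congr rfl fun B hB => ?_
    obtain ⟨hBL, hBM, hBN⟩ := (mem_filter.mp hB).2
    rw [← card_jointCount_eq a c B hBN, filter_filter]
    congr 1
    ext b
    simp only [mem_filter, mem_univ, true_and, and_iff_right_iff_imp]
    rintro rfl
    exact ⟨Matrix.ext fun r s => by rw [← hBL, sum_jointCount_right],
      Matrix.ext fun s t => by rw [← hBM, sum_jointCount_left]⟩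
  · simp only [coe_filter, mem_univ, true_and, Set.mem_ofPred_eq] at hb ⊢
    exact ⟨fun r s => by rw [sum_jointCount_right, hb.1],
      fun s t => by rw [sum_jointCount_left, hb.2], fun r t => sum_jointCount_mid a b c r t⟩

theorem AD_mul_AD_apply (L M : Matrix (Fin p) (Fin p) ℕ) (a c : Fin n → Fin p) :
    (AD n p L * AD n p M) a c = #{b | Dmat a b = L ∧ Dmat b c = M} := by
  simp only [Matrix.mul_apply, AD, Matrix.of_apply, ite_mul, one_mul, zero_mul, ← ite_and]
  rw [sum_boole]

theorem stmt_2_general (n p : ℕ)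
    (L M N : Matrix (Fin p) (Fin p) ℕ) :
    (∀ a c : Fin n → Fin p, Dmat a c = N →
        (AD n p L * AD n p M) a c = (cLMN n p L M N : ℂ)) ∧
      AD n p L * AD n p M =
        ∑ N' ∈ (Finset.univ : Finset (Fin p → Fin p → Fin (n + 1))).filter
            (fun N' => ∑ i, ∑ j, (N' i j : ℕ) = n),
          (cLMN n p L M (Matrix.of fun i j => (N' i j : ℕ)) : ℂ) •
            AD n p (Matrix.of fun i j => (N' i j : ℕ)) := by
  have hentry : ∀ N a c, Dmat a c = N → (AD n p L * AD n p M) a c = (cLMN n p L M N : ℂ) :=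
    fun N a c h => by rw [AD_mul_AD_apply, card_Dmat_eq_and_Dmat_eq L M N a c h]
  refine ⟨hentry N, ?_⟩
  ext a c
  let N₀ : Fin p → Fin p → Fin (n + 1) := fun i j => ⟨Dmat a c i j, Dmat_apply_lt a c i j⟩
  have hN₀ : ∀ N', Dmat a c = Matrix.of (fun i j => (N' i j : ℕ)) ↔ N₀ = N' := by
    simp [N₀, funext_iff, Fin.ext_iff, ← Matrix.ext_iff]
  rw [hentry (Dmat a c) a c rfl, Matrix.sum_apply]
  simp only [Matrix.smul_apply, AD, Matrix.of_apply, smul_eq_mul, mul_ite, mul_one, mul_zero, hN₀,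
    sum_ite_eq, mem_filter, mem_univ, true_and]
  rw [if_pos (sum_Dmat a c)]
  rfl

/-- for `L, M, N ∈ P(n,p)` and words `a, c` with `D(a,c) = N`, the `(a,c)` entry
of `A_L · A_M` equals `c_{L,M}^N`; consequently `A_L · A_M = Σ_N c_{L,M}^N A_N`. -/
theorem stmt_2 (n p : ℕ) (hn : 1 ≤ n) (hp : 1 ≤ p)
    (L M N : Matrix (Fin p) (Fin p) ℕ)
    (hL : ∑ i, ∑ j, L i j = n) (hM : ∑ i, ∑ j, M i j = n) (hN : ∑ i, ∑ j, N i j = n) :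
    (∀ a c : Fin n → Fin p, Dmat a c = N →
        (AD n p L * AD n p M) a c = (cLMN n p L M N : ℂ)) ∧
      AD n p L * AD n p M =
        ∑ N' ∈ (Finset.univ : Finset (Fin p → Fin p → Fin (n + 1))).filter
            (fun N' => ∑ i, ∑ j, (N' i j : ℕ) = n),
          (cLMN n p L M (Matrix.of fun i j => (N' i j : ℕ)) : ℂ) •
            AD n p (Matrix.of fun i j => (N' i j : ℕ)) :=
  stmt_2_general n p L M N
end
end

section
/- Let λ be a partition of n into at most p parts, let D ∈ P(n,p), and let λ' := D^T·𝟙 (the vector of column sums of D). If λ' = λ, define t(D) to be the tableau of shape λ whose i-th row contains exactly D_{j,i} entries equal to j (for each j ∈ [p]), arranged so that each row is non-decreasing. Then A_D · e_λ = e_{t(D)} if λ' = λ, and A_D · e_λ = 0 otherwise. -/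
open scoped Classical

noncomputable section

/-- Row (0-indexed) of the `k`-th box (0-indexed, row-major numbering) of the Ferrers
diagram of `lam`: the number of indices `i` with `λ_0 + ⋯ + λ_i ≤ k`. -/
def rowOf (p : ℕ) (lam : Fin p → ℕ) (k : ℕ) : ℕ :=
  (Finset.univ.filter fun i : Fin p => (∑ j ∈ Finset.univ.filter (· ≤ i), lam j) ≤ k).card

/-- Column (0-indexed) of the `k`-th box of the Ferrers diagram of `lam`. -/
def colOf (p : ℕ) (lam : Fin p → ℕ) (k : ℕ) : ℕ :=
  k - ∑ j ∈ Finset.univ.filter (fun j : Fin p => (j : ℕ) < rowOf p lam k), lam j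

/-- The column group `C_λ`: permutations of the boxes mapping every box to a box
in the same column. -/
def colGroup (n p : ℕ) (lam : Fin p → ℕ) : Finset (Equiv.Perm (Fin n)) :=
  Finset.univ.filter fun σ => ∀ k : Fin n, colOf p lam (σ k : ℕ) = colOf p lam (k : ℕ)

/-- The row group `R_λ`: permutations of the boxes mapping every box to a box
in the same row. -/
def rowGroup (n p : ℕ) (lam : Fin p → ℕ) : Finset (Equiv.Perm (Fin n)) :=
  Finset.univ.filter fun σ => ∀ k : Fin n, rowOf p lam (σ k : ℕ) = rowOf p lam (k : ℕ)

/-- The vector `e_t = Σ_{σ ∈ C_λ} sgn(σ) Σ_{t' ∼ t} χ^{σ t'} ∈ ℂ^{[p]^n}`, where `t' ∼ t`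
means `t' = π t` for some `π ∈ R_λ`, and `(σ t)(k) = t(σ⁻¹ k)`. -/
noncomputable def eT (n p : ℕ) (lam : Fin p → ℕ) (t : Fin n → Fin p) :
    (Fin n → Fin p) → ℂ :=
  ∑ σ ∈ colGroup n p lam, ((Equiv.Perm.sign σ : ℤ) : ℂ) •
    ∑ t' ∈ Finset.univ.filter (fun t' : Fin n → Fin p =>
        ∃ π ∈ rowGroup n p lam, t' = fun k => t (π⁻¹ k)),
      (Pi.single (fun k => t' (σ⁻¹ k)) (1 : ℂ) : (Fin n → Fin p) → ℂ)

/-- The tableau `t_λ` whose entries in row `i` all equal `i`. -/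
def tLam (n p : ℕ) (hp : 0 < p) (lam : Fin p → ℕ) : Fin n → Fin p :=
  fun k => ⟨rowOf p lam (k : ℕ) % p, Nat.mod_lt _ hp⟩

/-- The vector `e_λ := e_{t_λ}`. -/
noncomputable def eLam (n p : ℕ) (hp : 0 < p) (lam : Fin p → ℕ) : (Fin n → Fin p) → ℂ :=
  eT n p lam (tLam n p hp lam)

/-!
Since `t_λ` is fixed by `R_λ`, `e_λ = Σ_σ sgn σ χ^{σ t_λ}`, and the invariance
`D(σa, σb) = D(a, b)` gives `(A_D e_λ)_a = Σ_σ sgn σ [D(σ⁻¹a, t_λ) = D]`. The matrix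
`D(b, t_λ)` counts the entries `j` in row `i` of `b`. Its column sums are the row lengths
`λ_i`, which gives the second case; and it determines `b` up to row permutations, so
`[D(σ⁻¹a, t_λ) = D(t(D), t_λ)] = [σ⁻¹a ∼ t(D)]`, the coefficient of `χ^a` in the `σ`-term of
`e_{t(D)}`. Boxes are addressed through the row-major bijection `Σ i, Fin λ_i ≃ Fin n`.
-/

open Finset

lemma Fin.sum_castLE_eq_sum_Iio {M : Type*} [AddCommMonoid M] {m : ℕ} (f : Fin m → M)
    (a : Fin m) :
    ∑ i : Fin a, f (Fin.castLE a.2.le i) = ∑ j ∈ Iio a, f j :=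
  sum_bij' (fun i _ => Fin.castLE a.2.le i) (fun j hj => ⟨j, Fin.lt_def.1 (mem_Iio.1 hj)⟩)
    (fun i _ => mem_Iio.2 (Fin.lt_def.2 i.2)) (fun _ _ => mem_univ _) (fun _ _ => rfl)
    (fun _ _ => rfl) (fun _ _ => rfl)

lemma Equiv.Perm.exists_comp_eq_of_card_fiber_eq {α β : Type*} [Fintype α] [DecidableEq β]
    (u v : α → β) (h : ∀ y, #{k | u k = y} = #{k | v k = y}) :
    ∃ π : Equiv.Perm α, ∀ k, v (π k) = u k := by
  have e : ∀ y, {k // u k = y} ≃ {k // v k = y} := fun y =>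
    Fintype.equivOfCardEq (by simpa only [Fintype.card_subtype] using h y)
  refine ⟨(Equiv.sigmaFiberEquiv u).symm.trans
    ((Equiv.sigmaCongrRight e).trans (Equiv.sigmaFiberEquiv v)), fun k => ?_⟩
  exact (e (u k) ⟨k, rfl⟩).2

section Ferrers

variable {n p : ℕ} {lam : Fin p → ℕ}

/-- The row-major numbering of the boxes `(i, c)` of the Ferrers diagram of `lam`. -/
def boxEquiv (hsum : ∑ i, lam i = n) : (Σ i, Fin (lam i)) ≃ Fin n :=
  finSigmaFinEquiv.trans (finCongr hsum)

lemma boxEquiv_val (hsum : ∑ i, lam i = n) (x : Σ i, Fin (lam i)) :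
    (boxEquiv hsum x : ℕ) = ∑ j ∈ Iio x.1, lam j + x.2 := by
  simp [boxEquiv, Fin.sum_castLE_eq_sum_Iio]

lemma rowOf_boxEquiv (hsum : ∑ i, lam i = n) (x : Σ i, Fin (lam i)) :
    rowOf p lam (boxEquiv hsum x) = x.1 := by
  obtain ⟨i, c⟩ := x
  have hrow (i' : Fin p) :
      ∑ j ∈ univ.filter (· ≤ i'), lam j ≤ ∑ j ∈ Iio i, lam j + c ↔ i' < i := by
    rw [filter_ge_eq_Iic]
    constructor
    · intro h
      by_contra! hle
      have : ∑ j ∈ Iic i, lam j ≤ ∑ j ∈ Iic i', lam j :=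
        sum_le_sum_of_subset (Iic_subset_Iic.2 hle)
      rw [← Iio_insert, sum_insert (by simp)] at this
      have := c.2
      omega
    · intro h
      have : ∑ j ∈ Iic i', lam j ≤ ∑ j ∈ Iio i, lam j := sum_le_sum_of_subset
        (fun j hj => mem_Iio.2 (lt_of_le_of_lt (mem_Iic.1 hj) h))
      omega
  rw [rowOf, boxEquiv_val, filter_congr (fun i' _ => hrow i'), filter_gt_eq_Iio, Fin.card_Iio]

lemma rowOf_eq_fst (hsum : ∑ i, lam i = n) (k : Fin n) :
    rowOf p lam k = ((boxEquiv hsum).symm k).1 := by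
  simpa using rowOf_boxEquiv hsum ((boxEquiv hsum).symm k)

lemma rowOf_mono : Monotone (rowOf p lam) := fun _ _ h =>
  card_le_card fun i hi => by simp only [mem_filter] at hi ⊢; exact ⟨hi.1, hi.2.trans h⟩

lemma card_filter_rowOf_eq_and (hsum : ∑ i, lam i = n) (i : Fin p) (Q : Fin n → Prop)
    [DecidablePred Q] :
    #{k : Fin n | rowOf p lam (k : ℕ) = (i : ℕ) ∧ Q k} =
      #{c : Fin (lam i) | Q (boxEquiv hsum ⟨i, c⟩)} := by
  symm
  refine card_bij (fun c _ => boxEquiv hsum ⟨i, c⟩) ?_ ?_ ?_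
  · intro c hc
    simpa [rowOf_boxEquiv] using hc
  · intro c _ c' _ h
    simpa using (boxEquiv hsum).injective h
  · intro k hk
    obtain ⟨hrow, hQ⟩ := (mem_filter.1 hk).2
    obtain ⟨⟨i', c⟩, rfl⟩ := (boxEquiv hsum).surjective k
    obtain rfl : i' = i := Fin.ext (by simpa [rowOf_boxEquiv] using hrow)
    exact ⟨c, by simpa using hQ, rfl⟩

lemma card_filter_rowOf_eq (hsum : ∑ i, lam i = n) (i : Fin p) :
    #{k : Fin n | rowOf p lam (k : ℕ) = (i : ℕ)} = lam i := by
  simpa using card_filter_rowOf_eq_and hsum i (fun _ => True)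

lemma tLam_val (hp : 0 < p) (hsum : ∑ i, lam i = n) (k : Fin n) :
    (tLam n p hp lam k : ℕ) = rowOf p lam k :=
  Nat.mod_eq_of_lt (by rw [rowOf_eq_fst hsum]; exact Fin.isLt _)

end Ferrers

section Tableaux

variable {n p : ℕ}

lemma Dmat_comp_perm (a b : Fin n → Fin p) (σ : Equiv.Perm (Fin n)) :
    Dmat (fun k => a (σ k)) (fun k => b (σ k)) = Dmat a b := by
  ext i j
  simp only [Dmat, Matrix.of_apply]
  exact card_equiv σ (by simp)

lemma sum_Dmat_col (a b : Fin n → Fin p) (i : Fin p) :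
    ∑ j, Dmat a b j i = #{k | b k = i} := by
  rw [card_eq_sum_card_fiberwise (f := a) (t := univ) (fun _ _ => mem_univ _)]
  simp only [Dmat, Matrix.of_apply, filter_filter, and_comm]

variable {lam : Fin p → ℕ}

lemma Dmat_tLam_apply (hp : 0 < p) (hsum : ∑ i, lam i = n) (b : Fin n → Fin p)
    (j i : Fin p) :
    Dmat b (tLam n p hp lam) j i = #{k : Fin n | rowOf p lam (k : ℕ) = (i : ℕ) ∧ b k = j} := by
  simp only [Dmat, Matrix.of_apply, Fin.ext_iff, tLam_val hp hsum, and_comm]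

lemma sum_Dmat_tLam_col (hp : 0 < p) (hsum : ∑ i, lam i = n) (b : Fin n → Fin p)
    (i : Fin p) :
    ∑ j, Dmat b (tLam n p hp lam) j i = lam i := by
  simp only [sum_Dmat_col, Fin.ext_iff, tLam_val hp hsum, card_filter_rowOf_eq hsum]

lemma tLam_comp_of_mem_rowGroup (hp : 0 < p) (hsum : ∑ i, lam i = n)
    {π : Equiv.Perm (Fin n)} (hπ : π ∈ rowGroup n p lam) :
    (fun k => tLam n p hp lam (π k)) = tLam n p hp lam :=
  funext fun k => Fin.ext (by rw [tLam_val hp hsum, tLam_val hp hsum, (mem_filter.1 hπ).2 k])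

lemma inv_mem_rowGroup {π : Equiv.Perm (Fin n)} (hπ : π ∈ rowGroup n p lam) :
    π⁻¹ ∈ rowGroup n p lam :=
  mem_filter.2 ⟨mem_univ _, fun k => by simpa using ((mem_filter.1 hπ).2 (π⁻¹ k)).symm⟩

/-- `Dmat b t_λ` records how many entries `j` each row of `b` contains, and this content
determines `b` up to row permutations. -/
lemma Dmat_tLam_eq_iff (hp : 0 < p) (hsum : ∑ i, lam i = n) (b t : Fin n → Fin p) :
    Dmat b (tLam n p hp lam) = Dmat t (tLam n p hp lam) ↔
      ∃ π ∈ rowGroup n p lam, b = fun k => t (π⁻¹ k) := by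
  constructor
  · intro h
    obtain ⟨π, hπ⟩ := Equiv.Perm.exists_comp_eq_of_card_fiber_eq
      (fun k => (b k, tLam n p hp lam k)) (fun k => (t k, tLam n p hp lam k))
      fun y => by simpa [Dmat, Prod.ext_iff] using congrFun₂ h y.1 y.2
    simp only [Prod.ext_iff, forall_and] at hπ
    have hrow : π⁻¹ ∈ rowGroup n p lam := mem_filter.2 ⟨mem_univ _, fun k => by
      rw [← tLam_val hp hsum, ← tLam_val hp hsum, ← hπ.2 (π⁻¹ k)]; simp⟩
    exact ⟨π⁻¹, hrow, funext fun k => by simp [← hπ.1]⟩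
  · rintro ⟨π, hπ, rfl⟩
    conv_lhs => rw [← tLam_comp_of_mem_rowGroup hp hsum (inv_mem_rowGroup hπ)]
    exact Dmat_comp_perm _ _ _

end Tableaux

section Symmetrizer

variable {n p : ℕ} {lam : Fin p → ℕ}

variable (n p lam) in
def rowOrbit (t : Fin n → Fin p) : Finset (Fin n → Fin p) :=
  {t' | ∃ π ∈ rowGroup n p lam, t' = fun k => t (π⁻¹ k)}

lemma eT_eq_sum (t : Fin n → Fin p) :
    eT n p lam t = ∑ σ ∈ colGroup n p lam, ((Equiv.Perm.sign σ : ℤ) : ℂ) •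
      fun a => if (fun k => a (σ k)) ∈ rowOrbit n p lam t then 1 else 0 := by
  refine sum_congr rfl fun σ _ => congrArg _ (funext fun a => ?_)
  have hσ (t' : Fin n → Fin p) : a = (fun k => t' (σ⁻¹ k)) ↔ t' = fun k => a (σ k) := by
    constructor <;> rintro rfl <;> simp
  simp only [Finset.sum_apply, Pi.single_apply, hσ, sum_ite_eq']
  rfl

lemma rowOrbit_tLam (hp : 0 < p) (hsum : ∑ i, lam i = n) :
    rowOrbit n p lam (tLam n p hp lam) = {tLam n p hp lam} := by
  ext t'
  simp only [rowOrbit, mem_filter, mem_univ, true_and, mem_singleton]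
  constructor
  · rintro ⟨π, hπ, rfl⟩
    exact tLam_comp_of_mem_rowGroup hp hsum (inv_mem_rowGroup hπ)
  · rintro rfl
    exact ⟨1, mem_filter.2 ⟨mem_univ _, fun _ => rfl⟩, rfl⟩

lemma mulVec_eLam (hp : 0 < p) (hsum : ∑ i, lam i = n) (D : Matrix (Fin p) (Fin p) ℕ) :
    (AD n p D).mulVec (eLam n p hp lam) = ∑ σ ∈ colGroup n p lam,
      ((Equiv.Perm.sign σ : ℤ) : ℂ) •
        fun a => if Dmat (fun k => a (σ k)) (tLam n p hp lam) = D then 1 else 0 := by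
  have horbit := rowOrbit_tLam hp hsum
  simp only [rowOrbit] at horbit
  simp only [eLam, eT, horbit, sum_singleton, Matrix.mulVec_sum, Matrix.mulVec_smul,
    Matrix.mulVec_single_one]
  refine sum_congr rfl fun σ _ => congrArg _ (funext fun a => ?_)
  have hσ : Dmat (fun k => a (σ k)) (tLam n p hp lam) =
      Dmat a fun k => tLam n p hp lam (σ⁻¹ k) := by
    simpa using Dmat_comp_perm a (fun k => tLam n p hp lam (σ⁻¹ k)) σ
  rw [hσ]
  rfl

end Symmetrizer

section ContentTableau

variable {n p : ℕ} {lam : Fin p → ℕ} {D : Matrix (Fin p) (Fin p) ℕ}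

/-- Box `c` of row `i` receives the row index of box `c` in the diagram with row lengths
`D 0 i, D 1 i, …`: row `i` reads `D 0 i` zeros, then `D 1 i` ones, and so on. -/
def contentTableau (hsum : ∑ i, lam i = n) (hcol : ∀ i, ∑ j, D j i = lam i) : Fin n → Fin p :=
  (fun x : Σ i, Fin (lam i) => ((boxEquiv (hcol x.1)).symm x.2).1) ∘ (boxEquiv hsum).symm

variable (hsum : ∑ i, lam i = n) (hcol : ∀ i, ∑ j, D j i = lam i)

lemma contentTableau_boxEquiv (x : Σ i, Fin (lam i)) :
    contentTableau hsum hcol (boxEquiv hsum x) = ((boxEquiv (hcol x.1)).symm x.2).1 := by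
  rw [contentTableau, Function.comp_apply, Equiv.symm_apply_apply]

lemma contentTableau_le_of_rowOf_eq (k k' : Fin n) (hrow : rowOf p lam k = rowOf p lam k')
    (hle : (k : ℕ) ≤ k') : contentTableau hsum hcol k ≤ contentTableau hsum hcol k' := by
  obtain ⟨⟨i, c⟩, rfl⟩ := (boxEquiv hsum).surjective k
  obtain ⟨⟨i', c'⟩, rfl⟩ := (boxEquiv hsum).surjective k'
  obtain rfl : i = i' := Fin.ext (by simpa only [rowOf_boxEquiv] using hrow)
  have hcc' : (c : ℕ) ≤ c' := by simpa only [boxEquiv_val, add_le_add_iff_left] using hle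
  rw [contentTableau_boxEquiv, contentTableau_boxEquiv, Fin.le_def, ← rowOf_eq_fst (hcol i),
    ← rowOf_eq_fst (hcol i)]
  exact rowOf_mono hcc'

lemma card_contentTableau (j i : Fin p) :
    #{k : Fin n | rowOf p lam (k : ℕ) = (i : ℕ) ∧ contentTableau hsum hcol k = j} = D j i := by
  rw [card_filter_rowOf_eq_and hsum i, ← card_filter_rowOf_eq (hcol i) j]
  congr 1
  refine filter_congr fun c _ => ?_
  rw [contentTableau_boxEquiv, rowOf_eq_fst (hcol i), Fin.val_inj]

end ContentTableau

theorem stmt_4_general (n p : ℕ) (hp : 0 < p) (lam : Fin p → ℕ) (hsum : ∑ i, lam i = n)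
    (D : Matrix (Fin p) (Fin p) ℕ) :
    ((∀ i : Fin p, ∑ j, D j i = lam i) →
      (∃ tD : Fin n → Fin p,
        (∀ k k' : Fin n, rowOf p lam (k : ℕ) = rowOf p lam (k' : ℕ) → (k : ℕ) ≤ (k' : ℕ) →
          tD k ≤ tD k') ∧
        (∀ j i : Fin p, (Finset.univ.filter fun k : Fin n =>
          rowOf p lam (k : ℕ) = (i : ℕ) ∧ tD k = j).card = D j i)) ∧
      (∀ tD : Fin n → Fin p,
        ((∀ k k' : Fin n, rowOf p lam (k : ℕ) = rowOf p lam (k' : ℕ) → (k : ℕ) ≤ (k' : ℕ) →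
          tD k ≤ tD k') ∧
         (∀ j i : Fin p, (Finset.univ.filter fun k : Fin n =>
          rowOf p lam (k : ℕ) = (i : ℕ) ∧ tD k = j).card = D j i)) →
        (AD n p D).mulVec (eLam n p hp lam) = eT n p lam tD)) ∧
    ((¬ ∀ i : Fin p, ∑ j, D j i = lam i) →
      (AD n p D).mulVec (eLam n p hp lam) = 0) := by
  refine ⟨fun hcol => ⟨⟨contentTableau hsum hcol, contentTableau_le_of_rowOf_eq hsum hcol,
    card_contentTableau hsum hcol⟩, ?_⟩, fun hne => ?_⟩
  · rintro tD ⟨-, hcount⟩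
    have hD : Dmat tD (tLam n p hp lam) = D := by
      ext j i
      rw [Dmat_tLam_apply hp hsum, hcount]
    simp only [mulVec_eLam hp hsum, eT_eq_sum, rowOrbit, mem_filter, mem_univ, true_and,
      ← Dmat_tLam_eq_iff hp hsum, hD]
  · have hD (b : Fin n → Fin p) : Dmat b (tLam n p hp lam) ≠ D := fun h =>
      hne fun i => h ▸ sum_Dmat_tLam_col hp hsum b i
    simp only [mulVec_eLam hp hsum, hD, if_false, ← Pi.zero_def, smul_zero, sum_const_zero]

/-- if the vector of column sums `λ' = Dᵀ𝟙` of `D` equals `λ`, then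
`A_D e_λ = e_{t(D)}`, where `t(D)` is the tableau of shape `λ` whose `i`-th row contains
exactly `D_{j,i}` entries equal to `j` and whose rows are non-decreasing;
otherwise `A_D e_λ = 0`. -/
theorem stmt_4 (n p : ℕ) (hn : 1 ≤ n) (hp : 0 < p) (lam : Fin p → ℕ)
    (hdec : ∀ i j : Fin p, i ≤ j → lam j ≤ lam i) (hsum : ∑ i, lam i = n)
    (D : Matrix (Fin p) (Fin p) ℕ) (hD : ∑ i, ∑ j, D i j = n) :
    ((∀ i : Fin p, ∑ j, D j i = lam i) →
      (∃ tD : Fin n → Fin p,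
        (∀ k k' : Fin n, rowOf p lam (k : ℕ) = rowOf p lam (k' : ℕ) → (k : ℕ) ≤ (k' : ℕ) →
          tD k ≤ tD k') ∧
        (∀ j i : Fin p, (Finset.univ.filter fun k : Fin n =>
          rowOf p lam (k : ℕ) = (i : ℕ) ∧ tD k = j).card = D j i)) ∧
      (∀ tD : Fin n → Fin p,
        ((∀ k k' : Fin n, rowOf p lam (k : ℕ) = rowOf p lam (k' : ℕ) → (k : ℕ) ≤ (k' : ℕ) →
          tD k ≤ tD k') ∧
         (∀ j i : Fin p, (Finset.univ.filter fun k : Fin n =>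
          rowOf p lam (k : ℕ) = (i : ℕ) ∧ tD k = j).card = D j i)) →
        (AD n p D).mulVec (eLam n p hp lam) = eT n p lam tD)) ∧
    ((¬ ∀ i : Fin p, ∑ j, D j i = lam i) →
      (AD n p D).mulVec (eLam n p hp lam) = 0) :=
  stmt_4_general n p hp lam hsum D
end
end
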